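/- arXiv:2504.04396 — 2 statements merged into one kernel-verified Lean document; each statement's English description precedes it below -/
import Mathlib

section
/- Preserving a quaternion-Hermitian form is equivalent to preserving the associated reversion form: for every n, every h ∈ Mₙ(ℍ), and every A ∈ Mₙ(ℍ), one has A† · h · A = h if and only if revᵀ(A) · (jI · h) · A = jI · h, where jI denotes the scalar matrix j · Iₙ and A† is the entrywise quaternion-conjugate transpose of A. -/
open Quaternion Matrix

/-- Quaternion reversion: conjugation of only the `j` component. -/
def rev (q : ℍ[ℝ]) : ℍ[ℝ] := ⟨q.re, q.imI, -q.imJ, q.imK⟩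

/-- The reversion-transpose of a quaternionic matrix. -/
def revT {n : ℕ} (A : Matrix (Fin n) (Fin n) ℍ[ℝ]) : Matrix (Fin n) (Fin n) ℍ[ℝ] :=
  (A.map rev)ᵀ

/-- The conjugate transpose of a quaternionic matrix. -/
def dagger {n : ℕ} (A : Matrix (Fin n) (Fin n) ℍ[ℝ]) : Matrix (Fin n) (Fin n) ℍ[ℝ] :=
  (A.map (fun q => star q))ᵀ

/-- The quaternion `j`. -/
def jq : ℍ[ℝ] := ⟨0, 0, 1, 0⟩

/-! Reversion and conjugation are intertwined by `j`: `rev q * j = j * star q`. Hence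
`revT A * (j • 1) = j • dagger A`, so `revT A * (j • h) * A = j • (dagger A * h * A)`, and
since `j ≠ 0` the two invariance equations differ only by the factor `j`. -/

lemma rev_mul_jq (q : ℍ[ℝ]) : rev q * jq = jq * star q := by
  ext <;> simp only [Quaternion.re_mul, Quaternion.imI_mul, Quaternion.imJ_mul,
    Quaternion.imK_mul] <;> simp [rev, jq]

lemma jq_ne_zero : jq ≠ 0 := fun h => by simpa [jq] using congrArg (·.imJ) h

lemma revT_mul_jq_smul_one {n : ℕ} (A : Matrix (Fin n) (Fin n) ℍ[ℝ]) :
    revT A * (jq • (1 : Matrix (Fin n) (Fin n) ℍ[ℝ])) = jq • dagger A := by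
  ext i k : 1
  simp [revT, dagger, Matrix.mul_apply, Matrix.one_apply, rev_mul_jq]

lemma revT_mul_reversion_form_mul {n : ℕ} (h A : Matrix (Fin n) (Fin n) ℍ[ℝ]) :
    revT A * ((jq • (1 : Matrix (Fin n) (Fin n) ℍ[ℝ])) * h) * A = jq • (dagger A * h * A) := by
  rw [← mul_assoc, revT_mul_jq_smul_one, smul_mul, smul_mul]

/-- Preserving a quaternion-Hermitian form `h` is equivalent to preserving the associated
reversion form `j·h`. -/
theorem preserve_hermitian_iff_preserve_reversion_form
    (n : ℕ) (h A : Matrix (Fin n) (Fin n) ℍ[ℝ]) :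
    dagger A * h * A = h ↔
      revT A * ((jq • (1 : Matrix (Fin n) (Fin n) ℍ[ℝ])) * h) * A
        = (jq • (1 : Matrix (Fin n) (Fin n) ℍ[ℝ])) * h := by
  rw [revT_mul_reversion_form_mul, smul_mul, one_mul, smul_right_inj jq_ne_zero]
end

section
/- Sylvester's law of inertia fails for quaternion reversion forms: for all natural numbers p and q with n = p + q ≥ 1, there exists an invertible matrix C ∈ Mₙ(ℍ) such that revᵀ(C) · I_{p,q} · C = Iₙ, where I_{p,q} is the diagonal matrix with p entries +1 and q entries −1; hence every signature of a reversion-symmetric form is equivalent to the identity. -/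
open Quaternion Matrix

/-- The signature matrix `I_{p,q}` with `p` entries `+1` and `q` entries `−1`. -/
noncomputable def Ipq (p q : ℕ) : Matrix (Fin (p + q)) (Fin (p + q)) ℍ[ℝ] :=
  Matrix.diagonal fun t => if (t : ℕ) < p then 1 else -1

/-!
Reversion fixes `k` and `k² = -1`, so `rev k · (-1) · k = 1`: a diagonal change of basis with
entries `1` on the positive and `k` on the negative part of the signature turns `I_{p,q}` into
the identity.
-/

lemma rev_zero : rev 0 = 0 := by
  ext <;> simp [rev]

lemma rev_one : rev 1 = 1 := by
  ext <;> simp [rev]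

def quaternionK : ℍ[ℝ] := ⟨0, 0, 0, 1⟩

lemma rev_quaternionK : rev quaternionK = quaternionK := by
  ext <;> simp [rev, quaternionK]

lemma quaternionK_mul_self : quaternionK * quaternionK = -1 := by
  ext <;> simp only [re_mul, imI_mul, imJ_mul, imK_mul] <;> simp [quaternionK]

lemma revT_diagonal {n : ℕ} (d : Fin n → ℍ[ℝ]) :
    revT (diagonal d) = diagonal fun i => rev (d i) := by
  rw [revT, diagonal_map rev_zero, diagonal_transpose]

lemma revT_diagonal_mul_diagonal_mul_diagonal {n : ℕ} (u s : Fin n → ℍ[ℝ]) :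
    revT (diagonal u) * diagonal s * diagonal u =
      diagonal fun i => rev (u i) * s i * u i := by
  rw [revT_diagonal, diagonal_mul_diagonal, diagonal_mul_diagonal]

theorem exists_isUnit_revT_mul_diagonal_mul_eq_one {n : ℕ} {s : Fin n → ℍ[ℝ]}
    (hs : ∀ i, ∃ u, rev u * s i * u = 1) :
    ∃ C : Matrix (Fin n) (Fin n) ℍ[ℝ], IsUnit C ∧ revT C * diagonal s * C = 1 := by
  choose u hu using hs
  have hu_unit : IsUnit u := Pi.isUnit_iff.2 fun i =>
    isUnit_iff_ne_zero.2 fun hi => by simpa [hi] using hu i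
  refine ⟨diagonal u, hu_unit.map (diagonalRingHom _ _), ?_⟩
  rw [revT_diagonal_mul_diagonal_mul_diagonal, funext hu, diagonal_one]

theorem sylvester_fails_for_reversion_forms_general (p q : ℕ) :
    ∃ C : Matrix (Fin (p + q)) (Fin (p + q)) ℍ[ℝ],
      IsUnit C ∧ revT C * Ipq p q * C = 1 := by
  refine exists_isUnit_revT_mul_diagonal_mul_eq_one fun i => ?_
  split_ifs
  · exact ⟨1, by rw [rev_one, mul_one, mul_one]⟩
  · refine ⟨quaternionK, ?_⟩
    rw [rev_quaternionK, mul_neg_one, neg_mul, quaternionK_mul_self, neg_neg]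

/-- Sylvester's law of inertia fails for quaternion reversion forms: every signature is
equivalent to the identity via an invertible change of basis. -/
theorem sylvester_fails_for_reversion_forms (p q : ℕ) (hpq : 1 ≤ p + q) :
    ∃ C : Matrix (Fin (p + q)) (Fin (p + q)) ℍ[ℝ],
      IsUnit C ∧ revT C * Ipq p q * C = 1 :=
  sylvester_fails_for_reversion_forms_general p q
end
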